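/- Let X be a finite-dimensional real vector space, K ⊂ X a convex body with 0 in its interior, and Ψ the Minkowski norm (gauge) associated to K. Let W : X → X be a homogeneous polynomial vector field and f : X → ℝ a nonzero homogeneous polynomial function such that the vector field x ↦ f(x)·W(x) is forward tangent to ∂K. Then Ψ is constant along every trajectory of W, and W is tangent to ∂K. -/

import Mathlib

open Filter Topology

/-- `v` is *forward tangent* to `∂B` at `x` if there are a sequence `p i ∈ ∂B` with `p i → x`
and positive reals `c i` with `c i • (p i - x) → v`. -/
def IsForwardTangent {X : Type*} [NormedAddCommGroup X] [NormedSpace ℝ X]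
    (B : Set X) (x v : X) : Prop :=
  ∃ (p : ℕ → X) (c : ℕ → ℝ), (∀ i, p i ∈ frontier B) ∧ (∀ i, 0 < c i) ∧
    Tendsto p atTop (𝓝 x) ∧ Tendsto (fun i => c i • (p i - x)) atTop (𝓝 v)

/-- `v` is *tangent* to `∂B` at `x` if both `v` and `-v` are forward tangent to `∂B` at `x`. -/
def IsTangentVec {X : Type*} [NormedAddCommGroup X] [NormedSpace ℝ X]
    (B : Set X) (x v : X) : Prop :=
  IsForwardTangent B x v ∧ IsForwardTangent B x (-v)

/-- `W : X → X` is a *homogeneous polynomial vector field of degree `k`* if, in some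
(equivalently, any) linear coordinates given by a basis, the components of `W x` are
homogeneous polynomials of degree `k` in the coordinates of `x`. -/
def IsHomogPolyVectorField {X : Type*} [AddCommGroup X] [Module ℝ X]
    (k : ℕ) (W : X → X) : Prop :=
  ∃ (n : ℕ) (b : Module.Basis (Fin n) ℝ X) (P : Fin n → MvPolynomial (Fin n) ℝ),
    (∀ i, (P i).IsHomogeneous k) ∧
    ∀ x, W x = ∑ i, (MvPolynomial.eval (fun j => b.repr x j) (P i)) • b i

/-- `f : X → ℝ` is a *homogeneous polynomial function of degree `k`* if, in some
(equivalently, any) linear coordinates given by a basis, `f` is a homogeneous polynomial of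
degree `k` in the coordinates. -/
def IsHomogPolyFunction {X : Type*} [AddCommGroup X] [Module ℝ X]
    (k : ℕ) (f : X → ℝ) : Prop :=
  ∃ (n : ℕ) (b : Module.Basis (Fin n) ℝ X) (P : MvPolynomial (Fin n) ℝ),
    P.IsHomogeneous k ∧ ∀ x, f x = MvPolynomial.eval (fun j => b.repr x j) P

/-!
Write `D⁺Ψ(x; v)` for the one-sided directional derivative of the gauge `Ψ`, which is convex
and Lipschitz. At a point of `∂K`, a vector `v` is forward tangent to `∂K` exactly when
`D⁺Ψ(x; v) = 0`. Since `f`, `W` and `Ψ` are homogeneous, the hypothesis spreads from `∂K` to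
`D⁺Ψ(y; f(y) W(y)) = 0` for every `y ≠ 0`. So wherever `f(y) ≠ 0`, one of `D⁺Ψ(y; ±W(y))`
vanishes, and convexity (`D⁺Ψ(y; v) + D⁺Ψ(y; -v) ≥ 0`) makes both nonnegative. Both
inequalities are closed conditions and `{f ≠ 0}` is dense, so they hold everywhere. Then `Ψ` is
nondecreasing along the trajectories of both `W` and `-W`, hence constant along those of `W`.
Running this along the local trajectory through a point of `∂K` forces `D⁺Ψ(x; ±W(x)) = 0`,
which is tangency.
-/

open Set
open scoped NNReal

theorem monotoneOn_of_hasDerivWithinAt_Ici_nonneg {g g' : ℝ → ℝ} {D : Set ℝ}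
    (hD : D.OrdConnected) (hg : ContinuousOn g D)
    (hg' : ∀ t ∈ D, HasDerivWithinAt g (g' t) (Ici t) t) (hpos : ∀ t ∈ D, 0 ≤ g' t) :
    MonotoneOn g D := by
  intro s hs u hu hsu
  have hsub : Icc s u ⊆ D := hD.out hs hu
  have := image_le_of_deriv_right_le_deriv_boundary (f := fun t => -g t) (B := fun _ => -g s)
    (B' := 0) (hg.mono hsub).neg (fun t ht => (hg' t (hsub (Ico_subset_Icc_self ht))).neg)
    le_rfl continuousOn_const (fun t _ => hasDerivWithinAt_const t _ _)
    (fun t ht => by simpa using hpos t (hsub (Ico_subset_Icc_self ht)))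
    (right_mem_Icc.mpr hsu)
  simpa using this

section DirectionalDerivative

variable {X : Type*} [NormedAddCommGroup X] [NormedSpace ℝ X]

/-- For convex `φ` this one-sided derivative exists (`ConvexOn.hasDerivWithinAt_rightDirDeriv`);
otherwise `derivWithin` returns the junk value `0`. -/
noncomputable def rightDirDeriv (φ : X → ℝ) (x v : X) : ℝ :=
  derivWithin (fun t : ℝ => φ (x + t • v)) (Ioi 0) 0

theorem hasDerivAt_comp_neg_of_forall_mem_Ioo {γ : ℝ → X} {V : X → X} {a b : ℝ}
    (hγ : ∀ t ∈ Ioo a b, HasDerivAt γ (V (γ t)) t) :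
    ∀ t ∈ Ioo (-b) (-a), HasDerivAt (fun s => γ (-s)) (-V (γ (-t))) t := by
  intro t ht
  have := (hγ (-t) ⟨lt_neg.mp ht.2, neg_lt.mp ht.1⟩).scomp t (hasDerivAt_neg t)
  simpa [Function.comp_def] using this

namespace ConvexOn

variable {φ : X → ℝ}

theorem comp_line (hφ : ConvexOn ℝ univ φ) (x v : X) :
    ConvexOn ℝ univ fun t : ℝ => φ (x + t • v) := by
  refine ⟨convex_univ, fun s _ t _ a b ha hb hab => ?_⟩
  convert hφ.2 (mem_univ (x + s • v)) (mem_univ (x + t • v)) ha hb hab using 2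
  linear_combination (norm := module) -hab • x

theorem hasDerivWithinAt_rightDirDeriv (hφ : ConvexOn ℝ univ φ) (x v : X) :
    HasDerivWithinAt (fun t : ℝ => φ (x + t • v)) (rightDirDeriv φ x v) (Ioi 0) 0 :=
  (hφ.comp_line x v).hasDerivWithinAt_rightDeriv_of_mem_interior (by simp)

theorem rightDirDeriv_le_slope (hφ : ConvexOn ℝ univ φ) (x v : X) {t : ℝ} (ht : 0 < t) :
    rightDirDeriv φ x v ≤ (φ (x + t • v) - φ x) / t := by
  simpa [slope_def_field, rightDirDeriv] using
    (hφ.comp_line x v).rightDeriv_le_slope_of_mem_interior (x := 0) (by simp) (mem_univ t) ht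

theorem tendsto_slope_rightDirDeriv (hφ : ConvexOn ℝ univ φ) (x v : X) :
    Tendsto (fun t : ℝ => (φ (x + t • v) - φ x) / t) (𝓝[>] 0) (𝓝 (rightDirDeriv φ x v)) := by
  refine ((hasDerivWithinAt_iff_tendsto_slope' self_notMem_Ioi).mp
    (hφ.hasDerivWithinAt_rightDirDeriv x v)).congr fun t => ?_
  simp [slope_def_field]

theorem rightDirDeriv_nonneg_iff (hφ : ConvexOn ℝ univ φ) (x v : X) :
    0 ≤ rightDirDeriv φ x v ↔ ∀ t : ℝ, 0 < t → φ x ≤ φ (x + t • v) := by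
  refine ⟨fun h t ht => ?_, fun h => ?_⟩
  · have := (le_div_iff₀ ht).mp (h.trans (hφ.rightDirDeriv_le_slope x v ht))
    linarith
  · refine ge_of_tendsto (hφ.tendsto_slope_rightDirDeriv x v) ?_
    filter_upwards [self_mem_nhdsWithin] with t (ht : 0 < t)
    exact div_nonneg (sub_nonneg.mpr (h t ht)) ht.le

theorem hasDerivWithinAt_rightDirDeriv_comp_mul (hφ : ConvexOn ℝ univ φ) (x v : X) {c : ℝ}
    (hc : 0 < c) :
    HasDerivWithinAt (fun t : ℝ => φ (x + (c * t) • v)) (rightDirDeriv φ x v * c) (Ioi 0) 0 :=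
  (hφ.hasDerivWithinAt_rightDirDeriv x v).comp_of_eq 0
    (by simpa using ((hasDerivAt_id (0 : ℝ)).const_mul c).hasDerivWithinAt)
    (fun t (ht : 0 < t) => mul_pos hc ht) (mul_zero c).symm

theorem rightDirDeriv_smul (hφ : ConvexOn ℝ univ φ) (x v : X) {c : ℝ} (hc : 0 < c) :
    rightDirDeriv φ x (c • v) = c * rightDirDeriv φ x v := by
  rw [mul_comm]
  refine HasDerivWithinAt.derivWithin ?_ (uniqueDiffWithinAt_Ioi 0)
  simpa [smul_smul, mul_comm] using hφ.hasDerivWithinAt_rightDirDeriv_comp_mul x v hc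

theorem rightDirDeriv_add_rightDirDeriv_neg_nonneg (hφ : ConvexOn ℝ univ φ) (x v : X) :
    0 ≤ rightDirDeriv φ x v + rightDirDeriv φ x (-v) := by
  refine ge_of_tendsto ((hφ.tendsto_slope_rightDirDeriv x v).add
    (hφ.tendsto_slope_rightDirDeriv x (-v))) ?_
  filter_upwards [self_mem_nhdsWithin] with t (ht : 0 < t)
  have hmid := hφ.2 (mem_univ (x + t • v)) (mem_univ (x + t • -v))
    (by norm_num : (0 : ℝ) ≤ 1 / 2) (by norm_num : (0 : ℝ) ≤ 1 / 2) (by norm_num)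
  rw [show (1 / 2 : ℝ) • (x + t • v) + (1 / 2 : ℝ) • (x + t • -v) = x by module] at hmid
  rw [← add_div]
  apply div_nonneg _ ht.le
  simp only [smul_eq_mul] at hmid
  linarith

theorem rightDirDeriv_nonneg_of_smul_eq_zero (hφ : ConvexOn ℝ univ φ) {x v : X} {c : ℝ}
    (hc : c ≠ 0) (h : rightDirDeriv φ x (c • v) = 0) :
    0 ≤ rightDirDeriv φ x v ∧ 0 ≤ rightDirDeriv φ x (-v) := by
  have hv := hφ.rightDirDeriv_add_rightDirDeriv_neg_nonneg x v
  rcases hc.lt_or_gt with hneg | hpos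
  · rw [← neg_smul_neg, hφ.rightDirDeriv_smul x (-v) (neg_pos.mpr hneg)] at h
    have : rightDirDeriv φ x (-v) = 0 := (mul_eq_zero.mp h).resolve_left (by linarith)
    constructor <;> linarith
  · rw [hφ.rightDirDeriv_smul x v hpos] at h
    have : rightDirDeriv φ x v = 0 := (mul_eq_zero.mp h).resolve_left hpos.ne'
    constructor <;> linarith

theorem isClosed_setOf_rightDirDeriv_nonneg (hφ : ConvexOn ℝ univ φ) (hφc : Continuous φ)
    {V : X → X} (hV : Continuous V) : IsClosed {x | 0 ≤ rightDirDeriv φ x (V x)} := by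
  simp only [hφ.rightDirDeriv_nonneg_iff, ofPred_forall]
  exact isClosed_iInter fun t => isClosed_iInter fun _ =>
    isClosed_le hφc (hφc.comp (continuous_id.add (hV.const_smul t)))

theorem hasDerivWithinAt_Ici_comp (hφ : ConvexOn ℝ univ φ) {C : ℝ≥0} (hL : LipschitzWith C φ)
    {γ : ℝ → X} {v : X} {t₀ : ℝ} (hγ : HasDerivAt γ v t₀) :
    HasDerivWithinAt (φ ∘ γ) (rightDirDeriv φ (γ t₀) v) (Ici t₀) t₀ := by
  have hshift : HasDerivWithinAt (fun t : ℝ => t - t₀) 1 (Ioi t₀) t₀ :=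
    ((hasDerivAt_id t₀).sub_const t₀).hasDerivWithinAt
  have hline := (hφ.hasDerivWithinAt_rightDirDeriv (γ t₀) v).comp_of_eq t₀ hshift
    (fun t (ht : t₀ < t) => sub_pos.mpr ht) (sub_self t₀).symm
  rw [mul_one, ← hasDerivWithinAt_Ioi_iff_Ici] at *
  rw [hasDerivWithinAt_iff_isLittleO] at hline ⊢
  have herr : (fun t => φ (γ t) - φ (γ t₀ + (t - t₀) • v)) =o[𝓝[>] t₀] fun t => t - t₀ := by
    refine (Asymptotics.IsBigO.of_bound C (Eventually.of_forall fun t => ?_)).trans_isLittleO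
      ((hasDerivAt_iff_isLittleO.mp hγ).mono nhdsWithin_le_nhds)
    simpa only [dist_eq_norm, sub_add_eq_sub_sub] using
      hL.dist_le_mul (γ t) (γ t₀ + (t - t₀) • v)
  refine (herr.add hline).congr_left fun t => ?_
  simp only [Function.comp_apply, sub_self, zero_smul, add_zero, smul_eq_mul]
  ring

theorem monotoneOn_comp_of_rightDirDeriv_nonneg (hφ : ConvexOn ℝ univ φ) {C : ℝ≥0}
    (hL : LipschitzWith C φ) {V : X → X} (hV : ∀ x, 0 ≤ rightDirDeriv φ x (V x))
    {γ : ℝ → X} {a b : ℝ} (hγ : ∀ t ∈ Ioo a b, HasDerivAt γ (V (γ t)) t) :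
    MonotoneOn (φ ∘ γ) (Ioo a b) :=
  monotoneOn_of_hasDerivWithinAt_Ici_nonneg ordConnected_Ioo
    (fun t ht => (hL.continuous.continuousAt.comp (hγ t ht).continuousAt).continuousWithinAt)
    (fun t ht => hφ.hasDerivWithinAt_Ici_comp hL (hγ t ht)) (fun t _ => hV (γ t))

theorem eq_of_rightDirDeriv_nonneg (hφ : ConvexOn ℝ univ φ) {C : ℝ≥0}
    (hL : LipschitzWith C φ) {V : X → X}
    (hV : ∀ x, 0 ≤ rightDirDeriv φ x (V x) ∧ 0 ≤ rightDirDeriv φ x (-V x))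
    {γ : ℝ → X} {a b : ℝ} (hγ : ∀ t ∈ Ioo a b, HasDerivAt γ (V (γ t)) t) :
    ∀ s ∈ Ioo a b, ∀ t ∈ Ioo a b, φ (γ s) = φ (γ t) := by
  have hmono := hφ.monotoneOn_comp_of_rightDirDeriv_nonneg hL (fun x => (hV x).1) hγ
  have hanti := hφ.monotoneOn_comp_of_rightDirDeriv_nonneg hL (V := fun x => -V x)
    (fun x => (hV x).2) (hasDerivAt_comp_neg_of_forall_mem_Ioo hγ)
  have hneg : ∀ t ∈ Ioo a b, -t ∈ Ioo (-b) (-a) := fun t ht => ⟨neg_lt_neg ht.2, neg_lt_neg ht.1⟩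
  intro s hs t ht
  rcases le_total s t with hst | hts
  · refine le_antisymm (hmono hs ht hst) ?_
    simpa using hanti (hneg t ht) (hneg s hs) (neg_le_neg hst)
  · refine le_antisymm ?_ (hmono ht hs hts)
    simpa using hanti (hneg s hs) (hneg t ht) (neg_le_neg hts)

theorem rightDirDeriv_eq_zero_of_eventuallyEq (hφ : ConvexOn ℝ univ φ) {C : ℝ≥0}
    (hL : LipschitzWith C φ) {γ : ℝ → X} {v : X} {t₀ : ℝ} (hγ : HasDerivAt γ v t₀)
    (hconst : φ ∘ γ =ᶠ[𝓝 t₀] fun _ => φ (γ t₀)) :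
    rightDirDeriv φ (γ t₀) v = 0 :=
  (uniqueDiffWithinAt_Ici t₀).eq_deriv _ (hφ.hasDerivWithinAt_Ici_comp hL hγ)
    ((hasDerivWithinAt_const t₀ _ _).congr_of_eventuallyEq
      (nhdsWithin_le_nhds hconst) rfl)

theorem rightDirDeriv_eq_zero_of_forall_mem_Ioo (hφ : ConvexOn ℝ univ φ) {C : ℝ≥0}
    (hL : LipschitzWith C φ) {V : X → X} {γ : ℝ → X} {a b : ℝ}
    (hγ : ∀ t ∈ Ioo a b, HasDerivAt γ (V (γ t)) t)
    (hconst : ∀ s ∈ Ioo a b, ∀ t ∈ Ioo a b, φ (γ s) = φ (γ t)) {t₀ : ℝ} (ht₀ : t₀ ∈ Ioo a b) :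
    rightDirDeriv φ (γ t₀) (V (γ t₀)) = 0 ∧ rightDirDeriv φ (γ t₀) (-V (γ t₀)) = 0 := by
  constructor
  · refine hφ.rightDirDeriv_eq_zero_of_eventuallyEq hL (hγ t₀ ht₀) ?_
    filter_upwards [Ioo_mem_nhds ht₀.1 ht₀.2] with t ht using hconst t ht t₀ ht₀
  · have ht₀' : -t₀ ∈ Ioo (-b) (-a) := ⟨neg_lt_neg ht₀.2, neg_lt_neg ht₀.1⟩
    have := hφ.rightDirDeriv_eq_zero_of_eventuallyEq hL
      (hasDerivAt_comp_neg_of_forall_mem_Ioo hγ (-t₀) ht₀') ?_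
    · simpa using this
    filter_upwards [Ioo_mem_nhds ht₀'.1 ht₀'.2] with t ht
    exact hconst _ ⟨lt_neg.mp ht.2, neg_lt.mp ht.1⟩ _ (by simpa using ht₀)

theorem rightDirDeriv_eq_zero_of_tendsto (hφ : ConvexOn ℝ univ φ) {C : ℝ≥0}
    (hL : LipschitzWith C φ) {x v : X} {p : ℕ → X} {c : ℕ → ℝ} (hp : ∀ i, φ (p i) = φ x)
    (hc : ∀ i, 0 < c i) (hpx : Tendsto p atTop (𝓝 x))
    (hcp : Tendsto (fun i => c i • (p i - x)) atTop (𝓝 v)) :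
    rightDirDeriv φ x v = 0 := by
  rcases eq_or_ne v 0 with rfl | hv
  · simp [rightDirDeriv]
  have hinv : Tendsto (fun i => (c i)⁻¹) atTop (𝓝[>] 0) := by
    have hquot : Tendsto (fun i => ‖p i - x‖ / ‖c i • (p i - x)‖) atTop (𝓝 0) := by
      have := Filter.Tendsto.div (hpx.sub_const x).norm hcp.norm (norm_ne_zero_iff.mpr hv)
      rwa [sub_self, norm_zero, zero_div] at this
    refine tendsto_nhdsWithin_of_tendsto_nhds_of_eventually_within _
      (hquot.congr' ?_) (Eventually.of_forall fun i => inv_pos.mpr (hc i))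
    filter_upwards [hcp.eventually_ne hv] with i hi
    have hpi : p i - x ≠ 0 := fun h => hi (by rw [h, smul_zero])
    rw [norm_smul, Real.norm_of_nonneg (hc i).le, div_mul_cancel_right₀ (norm_ne_zero_iff.mpr hpi)]
  have hslope : Tendsto (fun i => (φ (x + (c i)⁻¹ • v) - φ x) / (c i)⁻¹) atTop (𝓝 0) := by
    refine squeeze_zero_norm (fun i => ?_)
      (by simpa using ((tendsto_const_nhds (x := v)).sub hcp).norm.const_mul (C : ℝ))
    have hdiff : x + (c i)⁻¹ • v - p i = (c i)⁻¹ • (v - c i • (p i - x)) := by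
      rw [smul_sub, smul_smul, inv_mul_cancel₀ (hc i).ne', one_smul]
      abel
    have := hL.dist_le_mul (x + (c i)⁻¹ • v) (p i)
    have hti : 0 < (c i)⁻¹ := inv_pos.mpr (hc i)
    rw [dist_eq_norm, dist_eq_norm, hdiff, norm_smul, hp i, Real.norm_of_nonneg hti.le] at this
    rw [norm_div, Real.norm_of_nonneg hti.le, div_le_iff₀ hti]
    linarith
  exact tendsto_nhds_unique ((hφ.tendsto_slope_rightDirDeriv x v).comp hinv) hslope

end ConvexOn

theorem isForwardTangent_of_eventually {B : Set X} {x v : X} {p : ℕ → X} {c : ℕ → ℝ}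
    (hpc : ∀ᶠ i in atTop, p i ∈ frontier B ∧ 0 < c i) (hpx : Tendsto p atTop (𝓝 x))
    (hcp : Tendsto (fun i => c i • (p i - x)) atTop (𝓝 v)) : IsForwardTangent B x v := by
  obtain ⟨N, hN⟩ := eventually_atTop.mp hpc
  exact ⟨fun i => p (i + N), fun i => c (i + N), fun i => (hN _ (Nat.le_add_left N i)).1,
    fun i => (hN _ (Nat.le_add_left N i)).2, (tendsto_add_atTop_iff_nat N).mpr hpx,
    (tendsto_add_atTop_iff_nat N).mpr hcp⟩

variable {K : Set X}

theorem convexOn_gauge (hK : Convex ℝ K) (habs : Absorbent ℝ K) : ConvexOn ℝ univ (gauge K) :=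
  ⟨convex_univ, fun x _ y _ a b ha hb _ => by
    simpa only [gauge_smul_of_nonneg ha, gauge_smul_of_nonneg hb] using
      gauge_add_le hK habs (a • x) (b • y)⟩

theorem rightDirDeriv_gauge_smul_left (hK : Convex ℝ K) (habs : Absorbent ℝ K) (x v : X)
    {l : ℝ} (hl : 0 < l) : rightDirDeriv (gauge K) (l • x) v = rightDirDeriv (gauge K) x v := by
  have hscaled : (fun t : ℝ => gauge K (l • x + t • v)) =
      fun t => l * gauge K (x + (l⁻¹ * t) • v) := by
    ext t
    rw [← smul_eq_mul, ← gauge_smul_of_nonneg hl.le, smul_add, smul_smul,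
      mul_inv_cancel_left₀ hl.ne']
  have := ((convexOn_gauge hK habs).hasDerivWithinAt_rightDirDeriv_comp_mul x v
    (inv_pos.mpr hl)).const_mul l
  rw [mul_left_comm, mul_inv_cancel₀ hl.ne', mul_one, ← hscaled] at this
  exact this.derivWithin (uniqueDiffWithinAt_Ioi 0)

theorem isForwardTangent_of_rightDirDeriv_gauge_eq_zero (hK : Convex ℝ K) (hK0 : K ∈ 𝓝 0)
    {x v : X} (hx : x ∈ frontier K) (h : rightDirDeriv (gauge K) x v = 0) :
    IsForwardTangent K x v := by
  have hgx : gauge K x = 1 := (gauge_eq_one_iff_mem_frontier hK hK0).mpr hx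
  obtain ⟨t, ht⟩ := exists_seq_tendsto (𝓝[>] (0 : ℝ))
  have hslope :=
    ((convexOn_gauge hK (absorbent_nhds_zero hK0)).tendsto_slope_rightDirDeriv x v).comp ht
  have hq : Tendsto (fun i => x + t i • v) atTop (𝓝 x) := by
    simpa using tendsto_const_nhds.add ((tendsto_nhds_of_tendsto_nhdsWithin ht).smul_const v)
  have hg := ((continuous_gauge hK hK0).tendsto x).comp hq
  simp only [Function.comp_def, hgx, h] at hslope hg
  set g : ℕ → ℝ := fun i => gauge K (x + t i • v)
  refine isForwardTangent_of_eventually (p := fun i => (g i)⁻¹ • (x + t i • v))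
    (c := fun i => g i / t i) ?_ ?_ ?_
  · filter_upwards [hg.eventually (lt_mem_nhds one_pos), ht.eventually self_mem_nhdsWithin]
      with i hi (hti : 0 < t i)
    refine ⟨(gauge_eq_one_iff_mem_frontier hK hK0).mp ?_, div_pos hi hti⟩
    rw [gauge_smul_of_nonneg (inv_nonneg.mpr hi.le), smul_eq_mul, inv_mul_cancel₀ hi.ne']
  · simpa using (hg.inv₀ one_ne_zero).smul hq
  · have : Tendsto (fun i => v - ((g i - 1) / t i) • x) atTop (𝓝 v) := by
      simpa using tendsto_const_nhds.sub (hslope.smul_const x)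
    refine this.congr' ?_
    filter_upwards [hg.eventually (lt_mem_nhds one_pos), ht.eventually self_mem_nhdsWithin]
      with i hi (hti : 0 < t i)
    match_scalars <;> field_simp
    ring

theorem isForwardTangent_iff_rightDirDeriv_gauge_eq_zero (hK : Convex ℝ K) (hK0 : K ∈ 𝓝 0)
    {x v : X} (hx : x ∈ frontier K) :
    IsForwardTangent K x v ↔ rightDirDeriv (gauge K) x v = 0 := by
  refine ⟨fun ⟨p, c, hp, hc, hpx, hcp⟩ => ?_,
    isForwardTangent_of_rightDirDeriv_gauge_eq_zero hK hK0 hx⟩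
  obtain ⟨C, hC⟩ := hK.lipschitz_gauge hK0
  have hfr : ∀ y ∈ frontier K, gauge K y = 1 := fun y hy =>
    (gauge_eq_one_iff_mem_frontier hK hK0).mpr hy
  exact (convexOn_gauge hK (absorbent_nhds_zero hK0)).rightDirDeriv_eq_zero_of_tendsto hC
    (fun i => by rw [hfr _ (hp i), hfr x hx]) hc hpx hcp

theorem rightDirDeriv_gauge_eq_zero_of_isForwardTangent (hKb : Bornology.IsBounded K)
    (hK : Convex ℝ K) (hK0 : K ∈ 𝓝 0) {U : X → X} {n : ℕ}
    (hU : ∀ (c : ℝ) (x : X), 0 < c → U (c • x) = c ^ n • U x)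
    (htang : ∀ x ∈ frontier K, IsForwardTangent K x (U x)) {y : X} (hy : y ≠ 0) :
    rightDirDeriv (gauge K) y (U y) = 0 := by
  have habs : Absorbent ℝ K := absorbent_nhds_zero hK0
  have hl : 0 < gauge K y :=
    (gauge_pos habs ((NormedSpace.isVonNBounded_iff ℝ).mpr hKb)).mpr hy
  set l := gauge K y
  have hxy : y = l • l⁻¹ • y := by rw [smul_smul, mul_inv_cancel₀ hl.ne', one_smul]
  have hx : l⁻¹ • y ∈ frontier K := by
    refine (gauge_eq_one_iff_mem_frontier hK hK0).mp ?_
    rw [gauge_smul_of_nonneg (inv_nonneg.mpr hl.le), smul_eq_mul, inv_mul_cancel₀ hl.ne']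
  rw [hxy, hU l _ hl, rightDirDeriv_gauge_smul_left hK habs _ _ hl,
    (convexOn_gauge hK habs).rightDirDeriv_smul _ _ (pow_pos hl n),
    (isForwardTangent_iff_rightDirDeriv_gauge_eq_zero hK hK0 hx).mp (htang _ hx), mul_zero]

end DirectionalDerivative

theorem MvPolynomial.IsHomogeneous.eval_smul {R σ : Type*} [CommSemiring R]
    {P : MvPolynomial σ R} {n : ℕ} (hP : P.IsHomogeneous n) (c : R) (v : σ → R) :
    MvPolynomial.eval (c • v) P = c ^ n * MvPolynomial.eval v P := by
  simp only [MvPolynomial.eval_eq, Finset.mul_sum]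
  refine Finset.sum_congr rfl fun d hd => ?_
  have hdeg : d.degree = n := by
    by_contra hne
    exact MvPolynomial.mem_support_iff.mp hd (hP.coeff_eq_zero hne)
  simp only [Pi.smul_apply, smul_eq_mul, mul_pow, Finset.prod_mul_distrib,
    Finset.prod_pow_eq_pow_sum, ← Finsupp.degree_apply, hdeg]
  ring

theorem AnalyticOnNhd.dense_setOf_ne_zero {𝕜 E F : Type*} [NontriviallyNormedField 𝕜]
    [NormedAddCommGroup E] [NormedSpace 𝕜 E] [NormedAddCommGroup F] [NormedSpace 𝕜 F]
    [PreconnectedSpace E] {f : E → F} (hf : AnalyticOnNhd 𝕜 f univ) (hf0 : f ≠ 0) :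
    Dense {x | f x ≠ 0} := by
  have hzero : interior {x | f x = 0} = ∅ :=
    eq_empty_of_forall_notMem fun z hz =>
      hf0 (hf.eq_of_eventuallyEq analyticOnNhd_const (mem_interior_iff_mem_nhds.mp hz))
  exact interior_eq_empty_iff_dense_compl.mp hzero

namespace IsHomogPolyFunction

variable {X : Type*} {m : ℕ} {f : X → ℝ}

theorem map_smul [AddCommGroup X] [Module ℝ X] (hf : IsHomogPolyFunction m f) (c : ℝ) (x : X) :
    f (c • x) = c ^ m * f x := by
  obtain ⟨n, b, P, hP, hfx⟩ := hf
  have hcoord : (fun j => b.repr (c • x) j) = c • fun j => b.repr x j := by ext; simp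
  rw [hfx, hfx, hcoord, hP.eval_smul]

theorem analyticOnNhd [NormedAddCommGroup X] [NormedSpace ℝ X] [FiniteDimensional ℝ X]
    (hf : IsHomogPolyFunction m f) : AnalyticOnNhd ℝ f univ := by
  obtain ⟨n, b, P, -, hfx⟩ := hf
  simpa [← funext hfx] using AnalyticOnNhd.eval_linearMap' (fun j => b.coord j) P

end IsHomogPolyFunction

namespace IsHomogPolyVectorField

variable {X : Type*} {k : ℕ} {W : X → X}

theorem map_smul [AddCommGroup X] [Module ℝ X] (hW : IsHomogPolyVectorField k W) (c : ℝ) (x : X) :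
    W (c • x) = c ^ k • W x := by
  obtain ⟨n, b, P, hP, hWx⟩ := hW
  have hcoord : (fun j => b.repr (c • x) j) = c • fun j => b.repr x j := by ext; simp
  simp only [hWx, hcoord, (hP _).eval_smul, Finset.smul_sum, smul_smul]

theorem analyticOnNhd [NormedAddCommGroup X] [NormedSpace ℝ X] [FiniteDimensional ℝ X]
    (hW : IsHomogPolyVectorField k W) : AnalyticOnNhd ℝ W univ := by
  obtain ⟨n, b, P, -, hWx⟩ := hW
  rw [funext hWx]
  refine Finset.analyticOnNhd_fun_sum _ fun i _ => AnalyticOnNhd.smul ?_ analyticOnNhd_const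
  simpa using AnalyticOnNhd.eval_linearMap' (fun j => b.coord j) (P i)

end IsHomogPolyVectorField

theorem rightDirDeriv_gauge_nonneg_of_isForwardTangent_smul
    {X : Type*} [NormedAddCommGroup X] [NormedSpace ℝ X] [FiniteDimensional ℝ X] {K : Set X}
    (hKb : Bornology.IsBounded K) (hK : Convex ℝ K) (hK0 : K ∈ 𝓝 0) {W : X → X} {k : ℕ}
    (hW : IsHomogPolyVectorField k W) {f : X → ℝ} {m : ℕ} (hf : IsHomogPolyFunction m f)
    (hf0 : f ≠ 0) (htang : ∀ x ∈ frontier K, IsForwardTangent K x (f x • W x)) (x : X) :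
    0 ≤ rightDirDeriv (gauge K) x (W x) ∧ 0 ≤ rightDirDeriv (gauge K) x (-W x) := by
  have hΨ := convexOn_gauge hK (absorbent_nhds_zero hK0)
  have hfW : ∀ (c : ℝ) (y : X), 0 < c → f (c • y) • W (c • y) = c ^ (m + k) • (f y • W y) :=
    fun c y _ => by rw [hf.map_smul, hW.map_smul, smul_smul, smul_smul, pow_add, mul_right_comm]
  have hgood : {y | f y ≠ 0} ⊆
      {y | 0 ≤ rightDirDeriv (gauge K) y (W y) ∧ 0 ≤ rightDirDeriv (gauge K) y (-W y)} := by
    intro y hfy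
    rcases eq_or_ne y 0 with rfl | hy
    · simp only [mem_ofPred_eq, hΨ.rightDirDeriv_nonneg_iff, zero_add, gauge_zero]
      exact ⟨fun _ _ => gauge_nonneg _, fun _ _ => gauge_nonneg _⟩
    · exact hΨ.rightDirDeriv_nonneg_of_smul_eq_zero hfy
        (rightDirDeriv_gauge_eq_zero_of_isForwardTangent hKb hK hK0 hfW htang hy)
  have hWc := hW.analyticOnNhd.continuous
  have hclosed := (hΨ.isClosed_setOf_rightDirDeriv_nonneg (continuous_gauge hK hK0) hWc).inter
    (hΨ.isClosed_setOf_rightDirDeriv_nonneg (continuous_gauge hK hK0) hWc.neg)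
  have hall := closure_minimal hgood hclosed
  rw [(hf.analyticOnNhd.dense_setOf_ne_zero hf0).closure_eq] at hall
  exact hall (mem_univ x)

theorem gauge_constant_along_trajectories_of_fW_tangent
    {X : Type*} [NormedAddCommGroup X] [NormedSpace ℝ X] [FiniteDimensional ℝ X]
    (K : Set X) (hKcomp : IsCompact K) (hKconv : Convex ℝ K)
    (h0 : (0 : X) ∈ interior K)
    (W : X → X) (k : ℕ) (hW : IsHomogPolyVectorField k W)
    (f : X → ℝ) (m : ℕ) (hf : IsHomogPolyFunction m f) (hf0 : f ≠ 0)
    (htang : ∀ x ∈ frontier K, IsForwardTangent K x (f x • W x)) :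
    (∀ (a b : ℝ) (γ : ℝ → X), (∀ t ∈ Set.Ioo a b, HasDerivAt γ (W (γ t)) t) →
      ∀ s ∈ Set.Ioo a b, ∀ t ∈ Set.Ioo a b, gauge K (γ s) = gauge K (γ t)) ∧
    (∀ x ∈ frontier K, IsTangentVec K x (W x)) := by
  have hK0 : K ∈ 𝓝 (0 : X) := mem_interior_iff_mem_nhds.mp h0
  have hΨ := convexOn_gauge hKconv (absorbent_nhds_zero hK0)
  obtain ⟨C, hC⟩ := hKconv.lipschitz_gauge hK0
  have hconst : ∀ (a b : ℝ) (γ : ℝ → X), (∀ t ∈ Ioo a b, HasDerivAt γ (W (γ t)) t) →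
      ∀ s ∈ Ioo a b, ∀ t ∈ Ioo a b, gauge K (γ s) = gauge K (γ t) := fun _ _ _ hγ =>
    hΨ.eq_of_rightDirDeriv_nonneg hC
      (rightDirDeriv_gauge_nonneg_of_isForwardTangent_smul hKcomp.isBounded hKconv hK0 hW hf hf0
        htang) hγ
  refine ⟨hconst, fun x hx => ?_⟩
  obtain ⟨γ, hγx, ε, hε, hγ⟩ := (hW.analyticOnNhd.contDiff.contDiffAt (x := x)
    ).exists_forall_mem_closedBall_exists_eq_forall_mem_Ioo_hasDerivAt₀ 0
  have hmem : (0 : ℝ) ∈ Ioo (0 - ε) (0 + ε) := by simpa using hε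
  obtain ⟨hplus, hminus⟩ :=
    hΨ.rightDirDeriv_eq_zero_of_forall_mem_Ioo hC hγ (hconst _ _ γ hγ) hmem
  rw [hγx] at hplus hminus
  exact ⟨(isForwardTangent_iff_rightDirDeriv_gauge_eq_zero hKconv hK0 hx).mpr hplus,
    (isForwardTangent_iff_rightDirDeriv_gauge_eq_zero hKconv hK0 hx).mpr hminus⟩
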